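/- arXiv:2206.14509 — 3 statements merged into one kernel-verified Lean document; each statement's English description precedes it below -/
import Mathlib

section
/- Let G be a graph and A, B disjoint vertex sets with |A| ≥ 5 and |B| ≥ 5, such that for every vertex v ∈ V(G), |N(v) ∩ A| ≤ 1 or |N(v) ∩ A| ≥ |A|-1, and |N(v) ∩ B| ≤ 1 or |N(v) ∩ B| ≥ |B|-1. Then the set A' of vertices of A with at least two neighbors in B has size 0, 1, |A|-1, or |A|. -/
theorem stmt_11 {V : Type*} [DecidableEq V] (G : SimpleGraph V) [DecidableRel G.Adj]
    (A B : Finset V) (hdisj : Disjoint A B) (hA : 5 ≤ A.card) (hB : 5 ≤ B.card)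
    (hdichA : ∀ v : V, (A.filter (fun a => G.Adj v a)).card ≤ 1 ∨
      A.card - 1 ≤ (A.filter (fun a => G.Adj v a)).card)
    (hdichB : ∀ v : V, (B.filter (fun b => G.Adj v b)).card ≤ 1 ∨
      B.card - 1 ≤ (B.filter (fun b => G.Adj v b)).card) :
    (A.filter (fun a => 2 ≤ (B.filter (fun b => G.Adj a b)).card)).card ∈
      ({0, 1, A.card - 1, A.card} : Set ℕ) := by
  set A' := A.filter (fun a => 2 ≤ (B.filter (fun b => G.Adj a b)).card) with hA'
  by_contra hcon
  simp only [Set.mem_insert_iff, Set.mem_singleton_iff] at hcon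
  push_neg at hcon
  obtain ⟨h0, h1, hm1, hm⟩ := hcon
  have hsub : A' ⊆ A := Finset.filter_subset _ _
  have hle : A'.card ≤ A.card := Finset.card_le_card hsub
  have hAd : 2 ≤ (A \ A').card := by
    rw [Finset.card_sdiff_of_subset hsub]; omega
  obtain ⟨a₁, ha₁, a₂, ha₂, h12⟩ := Finset.one_lt_card.mp (by omega : 1 < A'.card)
  obtain ⟨a₃, ha₃, a₄, ha₄, h34⟩ := Finset.one_lt_card.mp (by omega : 1 < (A \ A').card)
  have key : ∀ a ∈ A', B.card - 1 ≤ (B.filter (fun b => G.Adj a b)).card := by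
    intro a ha
    rw [hA', Finset.mem_filter] at ha
    rcases hdichB a with h | h
    · omega
    · exact h
  have k1 := key a₁ ha₁
  have k2 := key a₂ ha₂
  have hBu : ((B.filter (fun b => G.Adj a₁ b)) ∪ (B.filter (fun b => G.Adj a₂ b))).card ≤ B.card :=
    Finset.card_le_card (Finset.union_subset (Finset.filter_subset _ _) (Finset.filter_subset _ _))
  have hcard : 3 ≤ ((B.filter (fun b => G.Adj a₁ b)) ∩ (B.filter (fun b => G.Adj a₂ b))).card := by
    have := Finset.card_inter_add_card_union (B.filter (fun b => G.Adj a₁ b))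
      (B.filter (fun b => G.Adj a₂ b))
    omega
  set B' := (B.filter (fun b => G.Adj a₁ b)) ∩ (B.filter (fun b => G.Adj a₂ b)) with hB'
  have hstep : ∀ b ∈ B', G.Adj b a₃ ∨ G.Adj b a₄ := by
    intro b hb
    rw [hB', Finset.mem_inter, Finset.mem_filter, Finset.mem_filter] at hb
    have hbA : A.card - 1 ≤ (A.filter (fun a => G.Adj b a)).card := by
      rcases hdichA b with h | h
      · exfalso
        have hss : ({a₁, a₂} : Finset V) ⊆ A.filter (fun a => G.Adj b a) := by
          intro x hx
          simp only [Finset.mem_insert, Finset.mem_singleton] at hx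
          rcases hx with rfl | rfl
          · exact Finset.mem_filter.mpr ⟨hsub ha₁, hb.1.2.symm⟩
          · exact Finset.mem_filter.mpr ⟨hsub ha₂, hb.2.2.symm⟩
        have := Finset.card_le_card hss
        rw [Finset.card_insert_of_notMem (by simp [h12]), Finset.card_singleton] at this
        omega
      · exact h
    by_contra hc
    push_neg at hc
    have hss : ({a₃, a₄} : Finset V) ⊆ A \ A.filter (fun a => G.Adj b a) := by
      intro x hx
      simp only [Finset.mem_insert, Finset.mem_singleton] at hx
      rcases hx with rfl | rfl
      · exact Finset.mem_sdiff.mpr ⟨(Finset.mem_sdiff.mp ha₃).1,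
          fun hm' => hc.1 (Finset.mem_filter.mp hm').2⟩
      · exact Finset.mem_sdiff.mpr ⟨(Finset.mem_sdiff.mp ha₄).1,
          fun hm' => hc.2 (Finset.mem_filter.mp hm').2⟩
    have h2' := Finset.card_le_card hss
    rw [Finset.card_insert_of_notMem (by simp [h34]), Finset.card_singleton,
      Finset.card_sdiff_of_subset (Finset.filter_subset _ _)] at h2'
    have := Finset.card_le_card (Finset.filter_subset (fun a => G.Adj b a) A)
    omega
  have hsmall : ∀ a ∈ A \ A', (B.filter (fun b => G.Adj a b)).card ≤ 1 := by
    intro a ha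
    have h' := (Finset.mem_sdiff.mp ha).2
    rw [hA', Finset.mem_filter] at h'
    push_neg at h'
    have := h' (Finset.mem_sdiff.mp ha).1
    omega
  have hcover : B' ⊆ (B.filter (fun b => G.Adj a₃ b)) ∪ (B.filter (fun b => G.Adj a₄ b)) := by
    intro b hb
    have hbB : b ∈ B := Finset.filter_subset _ _ (Finset.mem_inter.mp hb).1
    rcases hstep b hb with h | h
    · exact Finset.mem_union_left _ (Finset.mem_filter.mpr ⟨hbB, h.symm⟩)
    · exact Finset.mem_union_right _ (Finset.mem_filter.mpr ⟨hbB, h.symm⟩)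
  have := Finset.card_le_card hcover
  have hu := Finset.card_union_le (B.filter (fun b => G.Adj a₃ b)) (B.filter (fun b => G.Adj a₄ b))
  have h3 := hsmall a₃ ha₃
  have h4 := hsmall a₄ ha₄
  omega
end

section
/- Let G be a graph, I a clique in G with |I| ≥ k+1 such that every vertex outside I is adjacent either to at most one vertex of I or to all vertices of I. If G has an independent set S of size k, then the induced subgraph of G obtained by deleting all but k vertices of I (keeping any k of them) still has an independent set of size k. -/
/-!
At most one vertex `w` of the independent set `S` lies in the clique `I`. If it is not among the
`k` retained vertices `J`, every other vertex of `S` lies outside `I` and is not adjacent to `w`,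
so it has at most one neighbour in `J`. These `k - 1` vertices cannot dominate all `k` vertices
of `J`, and any vertex of `J` they miss can replace `w`.
-/

open Finset

namespace SimpleGraph

variable {V : Type*} [DecidableEq V] (G : SimpleGraph V)

theorem exists_mem_forall_not_adj_of_card_lt [DecidableRel G.Adj] {T J : Finset V}
    (hfew : ∀ v ∈ T, #(J.filter (G.Adj v)) ≤ 1) (hlt : #T < #J) :
    ∃ z ∈ J, ∀ v ∈ T, ¬ G.Adj v z := by
  have hB : #(T.biUnion fun v => J.filter (G.Adj v)) < #J :=
    calc _ ≤ ∑ v ∈ T, #(J.filter (G.Adj v)) := card_biUnion_le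
      _ ≤ ∑ _v ∈ T, 1 := sum_le_sum hfew
      _ = #T := by simp
      _ < #J := hlt
  obtain ⟨z, hzJ, hzB⟩ := exists_mem_notMem_of_card_lt_card hB
  exact ⟨z, hzJ, fun v hv hadj => hzB (mem_biUnion.2 ⟨v, hv, mem_filter.2 ⟨hzJ, hadj⟩⟩)⟩

theorem forall_not_adj_insert {T : Finset V} (hT : ∀ u ∈ T, ∀ v ∈ T, ¬ G.Adj u v) {z : V}
    (hz : ∀ v ∈ T, ¬ G.Adj v z) : ∀ u ∈ insert z T, ∀ v ∈ insert z T, ¬ G.Adj u v := by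
  intro u hu v hv
  rcases mem_insert.1 hu with rfl | huT
  · rcases mem_insert.1 hv with rfl | hvT
    · exact G.loopless.irrefl _
    · exact fun h => hz v hvT h.symm
  · rcases mem_insert.1 hv with rfl | hvT
    · exact hz u huT
    · exact hT u huT v hvT

end SimpleGraph

theorem stmt_17_general {V : Type*} [DecidableEq V] (G : SimpleGraph V)
    [DecidableRel G.Adj] (k : ℕ) (I : Finset V)
    (hclique : ∀ u ∈ I, ∀ v ∈ I, u ≠ v → G.Adj u v)
    (hdich : ∀ v : V, v ∉ I →
      (I.filter (fun w => G.Adj v w)).card ≤ 1 ∨ ∀ w ∈ I, G.Adj v w)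
    (S : Finset V) (hScard : S.card = k)
    (hSind : ∀ u ∈ S, ∀ v ∈ S, ¬ G.Adj u v)
    (J : Finset V) (hJ : J ⊆ I) (hJcard : J.card = k) :
    ∃ S' : Finset V, S'.card = k ∧ (∀ v ∈ S', v ∈ I → v ∈ J) ∧
      ∀ u ∈ S', ∀ v ∈ S', ¬ G.Adj u v := by
  by_cases hSJ : ∀ v ∈ S, v ∈ I → v ∈ J
  · exact ⟨S, hScard, hSJ, hSind⟩
  push Not at hSJ
  obtain ⟨w, hwS, hwI, -⟩ := hSJ
  have hout : ∀ v ∈ S.erase w, v ∉ I := fun v hv hvI =>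
    hSind v (mem_of_mem_erase hv) w hwS (hclique v hvI w hwI (ne_of_mem_erase hv))
  have hfew : ∀ v ∈ S.erase w, #(J.filter (G.Adj v)) ≤ 1 := by
    intro v hv
    rcases hdich v (hout v hv) with hle | hall
    · exact (card_le_card (filter_subset_filter _ hJ)).trans hle
    · exact absurd (hall w hwI).symm (hSind w hwS v (mem_of_mem_erase hv))
  have hk : 0 < k := hScard ▸ card_pos.2 ⟨w, hwS⟩
  have hSw : #(S.erase w) = k - 1 := by rw [card_erase_of_mem hwS, hScard]
  obtain ⟨z, hzJ, hz⟩ := G.exists_mem_forall_not_adj_of_card_lt hfew (by omega)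
  have hzS : z ∉ S.erase w := fun h => hout z h (hJ hzJ)
  refine ⟨insert z (S.erase w), by rw [card_insert_of_notMem hzS]; omega, ?_,
    G.forall_not_adj_insert (fun u hu v hv => hSind u (mem_of_mem_erase hu) v
      (mem_of_mem_erase hv)) hz⟩
  intro v hv hvI
  rcases mem_insert.1 hv with rfl | hvS
  · exact hzJ
  · exact absurd hvI (hout v hvS)

theorem stmt_17 {V : Type*} [Fintype V] [DecidableEq V] (G : SimpleGraph V)
    [DecidableRel G.Adj] (k : ℕ) (I : Finset V)
    (hclique : ∀ u ∈ I, ∀ v ∈ I, u ≠ v → G.Adj u v) (hIcard : k + 1 ≤ I.card)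
    (hdich : ∀ v : V, v ∉ I →
      (I.filter (fun w => G.Adj v w)).card ≤ 1 ∨ ∀ w ∈ I, G.Adj v w)
    (S : Finset V) (hScard : S.card = k)
    (hSind : ∀ u ∈ S, ∀ v ∈ S, ¬ G.Adj u v)
    (J : Finset V) (hJ : J ⊆ I) (hJcard : J.card = k) :
    ∃ S' : Finset V, S'.card = k ∧ (∀ v ∈ S', v ∈ I → v ∈ J) ∧
      ∀ u ∈ S', ∀ v ∈ S', ¬ G.Adj u v :=
  stmt_17_general G k I hclique hdich S hScard hSind J hJ hJcard
end

section
/- Cographs satisfy the Ramsey bound R(s,t) ≤ s·t: every cograph on more than (s-1)(t-1) vertices contains a clique of size s or an independent set of size t. Equivalently, in a perfect graph on n vertices, the product of the clique number and the independence number is at least n. -/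
/-!
Take a maximal clique `C`; if it has fewer than `s` vertices, the rest of the graph has more
than `(s - 1)(t - 2)` vertices, so by induction it contains an `s`-clique or a `(t - 1)`-independent
set `S`. In a `P₄`-free graph every maximal clique meets every maximal independent set, so `S`,
being disjoint from `C`, is not maximal and extends to a `t`-independent set.
-/

open Finset

namespace SimpleGraph

variable {V : Type*} {G : SimpleGraph V}

def InducedP4Free (G : SimpleGraph V) : Prop :=
  ∀ a b c d : V,
    ¬ (G.Adj a b ∧ G.Adj b c ∧ G.Adj c d ∧ ¬ G.Adj a c ∧ ¬ G.Adj a d ∧ ¬ G.Adj b d)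

theorem InducedP4Free.induce (hG : G.InducedP4Free) (s : Set V) : (G.induce s).InducedP4Free :=
  fun a b c d => hG a b c d

theorem isNIndepSet_induce_iff {n : ℕ} (s : Set V) (t : Finset s) :
    (G.induce s).IsNIndepSet n t ↔ G.IsNIndepSet n (t.map (.subtype _)) := by
  simp [isNIndepSet_iff, Set.Pairwise]

theorem exists_not_adj_of_maximal_isClique {C : Finset V}
    (hC : Maximal (fun D : Finset V => G.IsClique (D : Set V)) C) {x : V} (hx : x ∉ C) :
    ∃ c ∈ C, ¬ G.Adj x c := by
  classical
  by_contra! h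
  have hxC : G.IsClique (insert x C : Finset V) := by
    rw [coe_insert]
    exact hC.prop.insert fun c hc _ => h c hc
  exact hx (insert_subset_iff.1 (hC.2 hxC (subset_insert x C))).1

theorem InducedP4Free.exists_isIndepSet_insert [DecidableEq V] (hG : G.InducedP4Free)
    {C S : Finset V} (hC : Maximal (fun D : Finset V => G.IsClique (D : Set V)) C)
    (hS : G.IsIndepSet (S : Set V)) (hSne : S.Nonempty) (hCS : Disjoint C S) :
    ∃ v ∉ S, G.IsIndepSet (insert v S : Finset V) := by
  classical
  by_contra! hmax
  have hnbr : ∀ v ∉ S, ∃ y ∈ S, G.Adj v y := by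
    intro v hv
    by_contra! h
    refine hmax v hv ?_
    rw [coe_insert]
    exact hS.insert fun y hy _ => ⟨h y hy, fun hyv => h y hy hyv.symm⟩
  obtain ⟨x, hxS, hxmax⟩ := S.exists_max_image (fun y => #{c ∈ C | G.Adj y c}) hSne
  obtain ⟨c, hcC, hxc⟩ :=
    exists_not_adj_of_maximal_isClique hC (Finset.disjoint_right.1 hCS hxS)
  obtain ⟨y, hyS, hcy⟩ := hnbr c (Finset.disjoint_left.1 hCS hcC)
  -- `y` sees `c` and `x` does not, so by the choice of `x` some `c'` is seen by `x` but not by `y`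
  obtain ⟨c', hc'C, hxc', hyc'⟩ : ∃ c' ∈ C, G.Adj x c' ∧ ¬ G.Adj y c' := by
    by_contra! h
    have hsub : {c ∈ C | G.Adj x c} ⊆ {c ∈ C | G.Adj y c} := fun c' hc' => by
      rw [mem_filter] at hc' ⊢
      exact ⟨hc'.1, h c' hc'.1 hc'.2⟩
    have hlt := (ssubset_iff_of_subset hsub).2 ⟨c, by simp [hcC, hcy.symm, hxc]⟩
    exact (card_lt_card hlt).not_ge (hxmax y hyS)
  have hxy : x ≠ y := by
    rintro rfl
    exact hxc hcy.symm
  have hcc' : c' ≠ c := by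
    rintro rfl
    exact hxc hxc'
  exact hG x c' c y ⟨hxc', hC.prop hc'C hcC hcc', hcy, hxc, hS hxS hyS hxy, fun h => hyc' h.symm⟩

theorem InducedP4Free.exists_isNClique_or_isNIndepSet_succ [Finite V] (hG : G.InducedP4Free)
    (s t : ℕ) (hcard : (s - 1) * t < Nat.card V) :
    (∃ C, G.IsNClique s C) ∨ ∃ S, G.IsNIndepSet (t + 1) S := by
  classical
  induction t generalizing V with
  | zero =>
    obtain ⟨v⟩ : Nonempty V := Nat.card_pos_iff.1 (by simpa using hcard) |>.1
    exact Or.inr ⟨{v}, by simp [isNIndepSet_iff]⟩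
  | succ t ih =>
    obtain ⟨C, -, hC⟩ := Finite.exists_le_maximal (p := fun D : Finset V => G.IsClique (D : Set V))
      (a := ∅) (by simp)
    by_cases hs : s ≤ #C
    · obtain ⟨D, hDC, hD⟩ := exists_subset_card_eq hs
      exact Or.inl ⟨D, hC.prop.subset (by simpa using hDC), hD⟩
    have hrest : (s - 1) * t < Nat.card ↥(C : Set V)ᶜ := by
      rw [Nat.card_coe_set_eq, Set.ncard_compl, Set.ncard_coe_finset]
      rw [Nat.mul_succ] at hcard
      omega
    rcases ih (hG.induce _) hrest with ⟨D, hD⟩ | ⟨S, hS⟩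
    · exact Or.inl ⟨_, (isNClique_induce_iff _ _ _).1 hD⟩
    · set S' := S.map (.subtype _)
      have hS' : G.IsNIndepSet (t + 1) S' := (isNIndepSet_induce_iff _ _).1 hS
      have hCS' : Disjoint C S' := by
        simp only [S', Finset.disjoint_right, mem_map, Function.Embedding.subtype_apply]
        rintro _ ⟨v, -, rfl⟩
        exact v.2
      obtain ⟨v, hv, hvS⟩ := hG.exists_isIndepSet_insert hC hS'.isIndepSet
        (card_pos.1 (by simp [hS'.card_eq])) hCS'
      exact Or.inr ⟨insert v S', hvS, by rw [card_insert_of_notMem hv, hS'.card_eq]⟩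

end SimpleGraph

theorem stmt_19_general {V : Type*} [Fintype V] (G : SimpleGraph V)
    (hcograph : ∀ a b c d : V,
      ¬ (G.Adj a b ∧ G.Adj b c ∧ G.Adj c d ∧ ¬ G.Adj a c ∧ ¬ G.Adj a d ∧ ¬ G.Adj b d))
    (s t : ℕ) (hcard : (s - 1) * (t - 1) < Fintype.card V) :
    (∃ C : Finset V, C.card = s ∧ ∀ u ∈ C, ∀ v ∈ C, u ≠ v → G.Adj u v) ∨
    (∃ S : Finset V, S.card = t ∧ ∀ u ∈ S, ∀ v ∈ S, ¬ G.Adj u v) := by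
  obtain _ | t := t
  · exact Or.inr ⟨∅, rfl, by simp⟩
  rw [← Nat.card_eq_fintype_card] at hcard
  obtain ⟨C, hC⟩ | ⟨S, hS⟩ :=
    SimpleGraph.InducedP4Free.exists_isNClique_or_isNIndepSet_succ (G := G) hcograph s t hcard
  · exact Or.inl ⟨C, hC.card_eq, fun u hu v hv => hC.isClique hu hv⟩
  · exact Or.inr ⟨S, hS.card_eq, fun u hu v hv huv => hS.isIndepSet hu hv (G.ne_of_adj huv) huv⟩

theorem stmt_19 {V : Type*} [Fintype V] [DecidableEq V] (G : SimpleGraph V)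
    (hcograph : ∀ a b c d : V,
      ¬ (G.Adj a b ∧ G.Adj b c ∧ G.Adj c d ∧ ¬ G.Adj a c ∧ ¬ G.Adj a d ∧ ¬ G.Adj b d))
    (s t : ℕ) (hcard : (s - 1) * (t - 1) < Fintype.card V) :
    (∃ C : Finset V, C.card = s ∧ ∀ u ∈ C, ∀ v ∈ C, u ≠ v → G.Adj u v) ∨
    (∃ S : Finset V, S.card = t ∧ ∀ u ∈ S, ∀ v ∈ S, ¬ G.Adj u v) :=
  stmt_19_general G hcograph s t hcard
end
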